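/- Let f be a positive sequence for n ≥ 1 with f_0 = 0, V any real sequence, and u a finitely supported sequence with u_0 = 0. Then ∑_{n≥1} V_n (u_n - u_{n-1})² + ∑_{n≥1} (div(V∇f)_n / f_n) u_n² = ∑_{n≥2} V_n ( √(f_{n-1}/f_n) u_n − √(f_n/f_{n-1}) u_{n-1} )², where div(V∇f)_n = V_{n+1}(f_{n+1} − f_n) − V_n(f_n − f_{n-1}). -/

import Mathlib

/-!
Ground state representation: for `a, b > 0`,
`(√(a/b) x − √(b/a) y)² = (x − y)² + (a − b)/b · x² + (b − a)/a · y²`,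
so each term on the right splits into a gradient term, a term of `(div(V∇f)/f) u²`, and the
increment of the flux `V_{n+1} (f_n − f_{n+1}) / f_{n+1} · u_{n+1}²`. The flux telescopes to minus
its value at the origin, which is `V_1 u_1²` because `f_0 = 0`; this is the gradient term
`V_1 (u_1 − u_0)²` (recall `u_0 = 0`) that the right-hand side lacks.
-/

open Finset

section EventuallyZero

variable {G : Type*} [AddCommGroup G] [TopologicalSpace G] {g : ℕ → G} {N : ℕ}

theorem summable_of_forall_ge_eq_zero (hg : ∀ n ≥ N, g n = 0) : Summable g :=
  summable_of_ne_finset_zero (s := range N) fun n hn => hg n (by simpa using hn)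

theorem tsum_sub_eq_neg_of_forall_ge_eq_zero (hg : ∀ n ≥ N, g n = 0) :
    ∑' n, (g (n + 1) - g n) = -g 0 := by
  rw [tsum_eq_sum (s := range N) fun n hn => ?_, sum_range_sub, hg N le_rfl, zero_sub]
  have hn : N ≤ n := by simpa using hn
  rw [hg n hn, hg (n + 1) (by omega), sub_zero]

end EventuallyZero

theorem sq_sqrt_div_mul_sub_sqrt_div_mul {a b : ℝ} (ha : 0 < a) (hb : 0 < b) (x y : ℝ) :
    (√(a / b) * x - √(b / a) * y) ^ 2 = (x - y) ^ 2 + (a - b) / b * x ^ 2 + (b - a) / a * y ^ 2 := by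
  have hab : √(a / b) * √(b / a) = 1 := by
    rw [← Real.sqrt_mul (by positivity), div_mul_div_cancel₀ hb.ne', div_self ha.ne', Real.sqrt_one]
  have hexpand : (√(a / b) * x - √(b / a) * y) ^ 2 =
      √(a / b) ^ 2 * x ^ 2 + √(b / a) ^ 2 * y ^ 2 - 2 * (√(a / b) * √(b / a)) * (x * y) := by ring
  rw [hexpand, hab, Real.sq_sqrt (by positivity), Real.sq_sqrt (by positivity)]
  field_simp
  ring

namespace WeightedHardy

variable (V f u : ℕ → ℝ)

noncomputable def flux (n : ℕ) : ℝ :=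
  V (n + 1) * (f n - f (n + 1)) / f (n + 1) * u (n + 1) ^ 2

theorem flux_zero (hf0 : f 0 = 0) (hf1 : f 1 ≠ 0) : flux V f u 0 = -(V 1 * u 1 ^ 2) := by
  simp only [flux, zero_add, hf0]
  field_simp
  ring

theorem ground_state_representation {n : ℕ} (ha : 0 < f (n + 1)) (hb : 0 < f (n + 2)) :
    V (n + 2) *
        (√(f (n + 1) / f (n + 2)) * u (n + 2) - √(f (n + 2) / f (n + 1)) * u (n + 1)) ^ 2 =
      V (n + 2) * (u (n + 2) - u (n + 1)) ^ 2 +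
        (V (n + 2) * (f (n + 2) - f (n + 1)) - V (n + 1) * (f (n + 1) - f n)) / f (n + 1) *
          u (n + 1) ^ 2 +
        (flux V f u (n + 1) - flux V f u n) := by
  rw [sq_sqrt_div_mul_sub_sqrt_div_mul ha hb]
  simp only [flux]
  field_simp
  ring

end WeightedHardy

theorem weighted_hardy_equality (V f u : ℕ → ℝ)
    (hf : ∀ n ≥ 1, 0 < f n) (hf0 : f 0 = 0)
    (hfin : ∃ N, ∀ n ≥ N, u n = 0) (h0 : u 0 = 0) :
    ∑' n : ℕ, V (n + 1) * (u (n + 1) - u n) ^ 2 +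
      ∑' n : ℕ,
        ((V (n + 2) * (f (n + 2) - f (n + 1)) - V (n + 1) * (f (n + 1) - f n)) / f (n + 1)) *
          (u (n + 1)) ^ 2 =
    ∑' n : ℕ,
      V (n + 2) *
        (Real.sqrt (f (n + 1) / f (n + 2)) * u (n + 2) -
          Real.sqrt (f (n + 2) / f (n + 1)) * u (n + 1)) ^ 2 := by
  obtain ⟨N, hN⟩ := hfin
  have hgrad := summable_of_forall_ge_eq_zero (N := N)
    (g := fun n => V (n + 1) * (u (n + 1) - u n) ^ 2) fun n hn => by
      simp [hN n hn, hN (n + 1) (by omega)]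
  have hpot := summable_of_forall_ge_eq_zero (N := N)
    (g := fun n => (V (n + 2) * (f (n + 2) - f (n + 1)) - V (n + 1) * (f (n + 1) - f n)) /
      f (n + 1) * u (n + 1) ^ 2) fun n hn => by simp [hN (n + 1) (by omega)]
  have hflux : ∀ n ≥ N, WeightedHardy.flux V f u n = 0 := fun n hn => by
    simp [WeightedHardy.flux, hN (n + 1) (by omega)]
  rw [tsum_congr fun n => WeightedHardy.ground_state_representation V f u (hf _ (by omega))
      (hf _ (by omega)),
    Summable.tsum_add (((summable_nat_add_iff 1).mpr hgrad).add hpot)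
      (summable_of_forall_ge_eq_zero fun n hn => by
        rw [hflux n hn, hflux (n + 1) (by omega), sub_zero]),
    Summable.tsum_add ((summable_nat_add_iff 1).mpr hgrad) hpot,
    tsum_sub_eq_neg_of_forall_ge_eq_zero hflux,
    WeightedHardy.flux_zero V f u hf0 (hf 1 le_rfl).ne', hgrad.tsum_eq_zero_add, h0]
  ring
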